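/- arXiv:2412.03919 — 2 statements merged into one kernel-verified Lean document; each statement's English description precedes it below -/
import Mathlib

section
/- Let n be a positive integer, P a real n×n positive definite matrix, M a real n×n matrix, and λ, π positive real numbers. Then λ·P − (1+π)·Mᵀ·P·M is positive semidefinite if and only if λ·P⁻¹ − (1+π)·M·P⁻¹·Mᵀ is positive semidefinite. -/
open Matrix

namespace Matrix.PosDef

variable {m n K : Type*} [Fintype m] [Fintype n] [DecidableEq m] [DecidableEq n]
  [Field K] [PartialOrder K] [StarRing K] [StarOrderedRing K]

theorem schur_complement_posSemidef_comm {A : Matrix m m K} {D : Matrix n n K}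
    (hA : A.PosDef) (hD : D.PosDef) (B : Matrix m n K) :
    (D - Bᴴ * A⁻¹ * B).PosSemidef ↔ (A - B * D⁻¹ * Bᴴ).PosSemidef := by
  let _ := hA.isUnit.invertible
  let _ := hD.isUnit.invertible
  rw [← fromBlocks₁₁ B D hA, fromBlocks₂₂ A B hD]

end Matrix.PosDef

theorem lyapunov_inverse_equiv_general
    (n : ℕ)
    (P : Matrix (Fin n) (Fin n) ℝ) (hP : P.PosDef)
    (M : Matrix (Fin n) (Fin n) ℝ) (lam π : ℝ) (hlam : 0 < lam) (hπ : 0 < π) :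
    (lam • P - (1 + π) • (Mᵀ * P * M)).PosSemidef ↔
      (lam • P⁻¹ - (1 + π) • (M * P⁻¹ * Mᵀ)).PosSemidef := by
  let _ := invertibleOfNonzero hlam.ne'
  let _ := hP.isUnit.invertible
  have inv_lam_smul {Q : Matrix (Fin n) (Fin n) ℝ} [Invertible Q] :
      (lam • Q)⁻¹ = lam⁻¹ • Q⁻¹ := by
    rw [Matrix.inv_smul (k := lam) (h := isUnit_det_of_invertible Q), invOf_eq_inv]
  -- Blocks `λP⁻¹`, `c • M`, `λP` with `c² = λ(1+π)`: the two Schur complements are the two sides.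
  set c := √(lam * (1 + π))
  have hc : c * (lam⁻¹ * c) = 1 + π := by
    rw [mul_left_comm, Real.mul_self_sqrt (by positivity)]
    field_simp
  have scale {X Y Z : Matrix (Fin n) (Fin n) ℝ} :
      c • X * lam⁻¹ • Y * c • Z = (1 + π) • (X * Y * Z) := by
    simp only [Matrix.smul_mul, Matrix.mul_smul, smul_smul, hc]
  have key := (hP.inv.smul hlam).schur_complement_posSemidef_comm (hP.smul hlam) (c • M)
  rwa [inv_lam_smul, inv_lam_smul, inv_inv_of_invertible, conjTranspose_smul,
    conjTranspose_eq_transpose_of_trivial, star_trivial, scale, scale] at key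

/-- Schur-complement equivalence: for positive definite `P`,
`λP - (1+π) Mᵀ P M ⪰ 0 ↔ λP⁻¹ - (1+π) M P⁻¹ Mᵀ ⪰ 0`. -/
theorem lyapunov_inverse_equiv
    (n : ℕ) (hn : 0 < n)
    (P : Matrix (Fin n) (Fin n) ℝ) (hP : P.PosDef)
    (M : Matrix (Fin n) (Fin n) ℝ) (lam π : ℝ) (hlam : 0 < lam) (hπ : 0 < π) :
    (lam • P - (1 + π) • (Mᵀ * P * M)).PosSemidef ↔
      (lam • P⁻¹ - (1 + π) • (M * P⁻¹ * Mᵀ)).PosSemidef :=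
  lyapunov_inverse_equiv_general n P hP M lam π hlam hπ
end

section
/- Let n, N, N̂, m, T be positive integers and δ ≥ 0, π > 0, α > 0, λ ∈ (0,1] real numbers. Let A (n×N), B (n×N̂) be real matrices, and let R₀T (N×T), G₀T (N̂×T), U₀T (m×T), W₀T (n×T), X₁T (n×T) be real matrices with X₁T = A·R₀T + B·G₀T + W₀T and every column w of W₀T satisfying wᵀw ≤ δ. Fix x ∈ ℝⁿ, a real N×n matrix L, a real N̂×m matrix Gx, a real n×n positive definite matrix P, and a real T×n matrix H with R₀T·H = L·P⁻¹. Set R̃ := [R₀T; Gx·U₀T] (an (N+N̂)×T matrix, vertical stacking) and R̂ := [R₀T; G₀T]. Assume the block matrix [[−λP⁻¹, 0, 0], [0, 0, R̃·H], [0, (R̃·H)ᵀ, −(1+π)⁻¹P⁻¹]] − α·[[X₁T·X₁Tᵀ − TδIₙ, −X₁T·R̂ᵀ, 0], [−R̂·X₁Tᵀ, R̂·R̂ᵀ, 0], [0, 0, 0]] is negative semidefinite. Define u := (U₀T·H·P)·x. Then for every w ∈ ℝⁿ with wᵀw ≤ δ, the vector x⁺ := A·(L·x) + B·(Gx·u)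 + w satisfies (x⁺)ᵀP x⁺ ≤ λ·xᵀPx + (1 + 1/π)·‖√P‖²·wᵀw, where √P is the positive semidefinite square root of P and ‖√P‖ its ℓ²→ℓ² operator norm. -/
/-!
Evaluating the data LMI at `(P s, [A B]ᵀ P s, P t)` is an S-procedure: since
`X₁T - [A B] R̂ = W₀T` and every noise column has energy at most `δ`, the `α`-weighted data block
contributes a nonpositive term, and `R₀T H = L P⁻¹` identifies `[A B] R̃ H P` with the closed loop.
What remains is `2 ⟪P s, a t⟫ ≤ λ sᵀP s + (1 + π)⁻¹ tᵀP t` for the nominal successor `a t`;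
at `s = λ⁻¹ a x`, `t = x` it gives `(1 + π) aᵀP a ≤ λ xᵀP x`. Young's inequality for the form of
`P` and `wᵀP w = ‖√P w‖² ≤ ‖√P‖² wᵀw` then absorb the disturbance.
-/

open Matrix

def Matrix.NegSemidef {k : Type*} [Fintype k] (M : Matrix k k ℝ) : Prop :=
  M.IsSymm ∧ ∀ v : k → ℝ, v ⬝ᵥ M.mulVec v ≤ 0

noncomputable def l2OpNorm {n : ℕ} (M : Matrix (Fin n) (Fin n) ℝ) : ℝ :=
  ‖Matrix.toEuclideanCLM (𝕜 := ℝ) M‖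

namespace Matrix

variable {ι κ ρ τ : Type*} [Fintype ι] [Fintype κ] [Fintype ρ] [Fintype τ]

lemma dotProduct_self_nonneg (v : ι → ℝ) : 0 ≤ v ⬝ᵥ v := by
  simpa using dotProduct_star_self_nonneg v

lemma dotProduct_mul_self_le (u v : ι → ℝ) : (u ⬝ᵥ v) * (u ⬝ᵥ v) ≤ (u ⬝ᵥ u) * (v ⬝ᵥ v) := by
  simpa [dotProduct, sq] using Finset.sum_mul_sq_le_sq_mul_sq Finset.univ u v

lemma dotProduct_mul_transpose_mulVec (M : Matrix ι κ ℝ) (N : Matrix ρ κ ℝ) (v : ι → ℝ)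
    (w : ρ → ℝ) : v ⬝ᵥ (M * Nᵀ) *ᵥ w = Mᵀ *ᵥ v ⬝ᵥ Nᵀ *ᵥ w := by
  rw [← mulVec_mulVec, dotProduct_mulVec, mulVec_transpose, mulVec_transpose]

lemma sumElim_dotProduct_fromBlocks_mulVec_sumElim (A : Matrix ι ι ℝ) (B : Matrix ι κ ℝ)
    (C : Matrix κ ι ℝ) (D : Matrix κ κ ℝ) (x : ι → ℝ) (y : κ → ℝ) :
    Sum.elim x y ⬝ᵥ fromBlocks A B C D *ᵥ Sum.elim x y
      = x ⬝ᵥ A *ᵥ x + x ⬝ᵥ B *ᵥ y + y ⬝ᵥ C *ᵥ x + y ⬝ᵥ D *ᵥ y := by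
  simp only [fromBlocks_mulVec, Sum.elim_comp_inl, Sum.elim_comp_inr,
    sumElim_dotProduct_sumElim, dotProduct_add]
  ring

lemma transpose_mulVec_dotProduct_self_le {W : Matrix ι τ ℝ} {δ : ℝ}
    (hW : ∀ k : τ, (fun i => W i k) ⬝ᵥ (fun i => W i k) ≤ δ) (ξ : ι → ℝ) :
    Wᵀ *ᵥ ξ ⬝ᵥ Wᵀ *ᵥ ξ ≤ Fintype.card τ * δ * (ξ ⬝ᵥ ξ) := by
  calc Wᵀ *ᵥ ξ ⬝ᵥ Wᵀ *ᵥ ξ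
      = ∑ k : τ, ((fun i => W i k) ⬝ᵥ ξ) * ((fun i => W i k) ⬝ᵥ ξ) := rfl
    _ ≤ ∑ _k : τ, δ * (ξ ⬝ᵥ ξ) := Finset.sum_le_sum fun k _ =>
        (dotProduct_mul_self_le _ _).trans
          (mul_le_mul_of_nonneg_right (hW k) (dotProduct_self_nonneg ξ))
    _ = Fintype.card τ * δ * (ξ ⬝ᵥ ξ) := by
        rw [Finset.sum_const, Finset.card_univ, nsmul_eq_mul, mul_assoc]

lemma IsSymm.dotProduct_mulVec_comm {P : Matrix ι ι ℝ} (hP : P.IsSymm) (v w : ι → ℝ) :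
    v ⬝ᵥ P *ᵥ w = w ⬝ᵥ P *ᵥ v := by
  rw [← dotProduct_transpose_mulVec, hP.eq]

lemma PosSemidef.dotProduct_add_mulVec_add_le {P : Matrix ι ι ℝ} (hP : P.PosSemidef) {π : ℝ}
    (hπ : 0 < π) (a w : ι → ℝ) :
    (a + w) ⬝ᵥ P *ᵥ (a + w) ≤ (1 + π) * (a ⬝ᵥ P *ᵥ a) + (1 + π⁻¹) * (w ⬝ᵥ P *ᵥ w) := by
  have hsymm : w ⬝ᵥ P *ᵥ a = a ⬝ᵥ P *ᵥ w :=
    (isHermitian_iff_isSymm.mp hP.isHermitian).dotProduct_mulVec_comm w a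
  have h0 : 0 ≤ (π • a - w) ⬝ᵥ P *ᵥ (π • a - w) := by
    simpa using hP.dotProduct_mulVec_nonneg (π • a - w)
  simp only [mulVec_add, mulVec_sub, mulVec_smul, dotProduct_add, add_dotProduct,
    dotProduct_sub, sub_dotProduct, dotProduct_smul, smul_dotProduct, smul_eq_mul, hsymm] at h0 ⊢
  set Y := a ⬝ᵥ P *ᵥ a
  set C := a ⬝ᵥ P *ᵥ w
  set V := w ⬝ᵥ P *ᵥ w
  have hscaled : π⁻¹ * (π * (π * Y - C) - (π * C - V)) = π * Y - 2 * C + π⁻¹ * V := by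
    field_simp
    ring
  have := mul_nonneg (inv_nonneg.mpr hπ.le) h0
  rw [hscaled] at this
  linarith

lemma dotProduct_mulVec_le_mul_of_forall_two_mul_le {P : Matrix ι ι ℝ} {a : ι → ℝ} {lam K : ℝ}
    (hlam : 0 < lam) (h : ∀ s, 2 * (P *ᵥ s ⬝ᵥ a) ≤ lam * (s ⬝ᵥ P *ᵥ s) + K) :
    a ⬝ᵥ P *ᵥ a ≤ lam * K := by
  have hs := h (lam⁻¹ • a)
  simp only [mulVec_smul, smul_dotProduct, dotProduct_smul, smul_eq_mul,
    dotProduct_comm (P *ᵥ a) a] at hs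
  field_simp at hs
  nlinarith

variable [DecidableEq ι]

/-- The matrix of the LMI (12c), with `Q` standing for `P⁻¹`, `K` for `R̃ H`, `X` for `X₁T`,
`R` for `R̂` and `c` for `T δ`. -/
noncomputable def dataLMI (Q : Matrix ι ι ℝ) (K : Matrix ρ ι ℝ) (X : Matrix ι τ ℝ) (R : Matrix ρ τ ℝ)
    (lam π α c : ℝ) : Matrix (ι ⊕ (ρ ⊕ ι)) (ι ⊕ (ρ ⊕ ι)) ℝ :=
  fromBlocks (-(lam • Q)) (fromCols (0 : Matrix ι ρ ℝ) (0 : Matrix ι ι ℝ))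
      (fromRows (0 : Matrix ρ ι ℝ) (0 : Matrix ι ι ℝ))
      (fromBlocks (0 : Matrix ρ ρ ℝ) K Kᵀ (-((1 + π)⁻¹ • Q)))
    - α • fromBlocks (X * Xᵀ - c • (1 : Matrix ι ι ℝ))
      (fromCols (-(X * Rᵀ)) (0 : Matrix ι ι ℝ)) (fromRows (-(R * Xᵀ)) (0 : Matrix ι ι ℝ))
      (fromBlocks (R * Rᵀ) (0 : Matrix ρ ι ℝ) (0 : Matrix ι ρ ℝ) (0 : Matrix ι ι ℝ))

lemma sumElim_dotProduct_dataLMI_mulVec_sumElim (Q : Matrix ι ι ℝ) (K : Matrix ρ ι ℝ)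
    (X : Matrix ι τ ℝ) (R : Matrix ρ τ ℝ) (lam π α c : ℝ) (ξ ζ : ι → ℝ) (η : ρ → ℝ) :
    Sum.elim ξ (Sum.elim η ζ) ⬝ᵥ dataLMI Q K X R lam π α c *ᵥ Sum.elim ξ (Sum.elim η ζ)
      = -(lam * (ξ ⬝ᵥ Q *ᵥ ξ)) + 2 * (η ⬝ᵥ K *ᵥ ζ) - (1 + π)⁻¹ * (ζ ⬝ᵥ Q *ᵥ ζ)
        - α * ((Xᵀ *ᵥ ξ - Rᵀ *ᵥ η) ⬝ᵥ (Xᵀ *ᵥ ξ - Rᵀ *ᵥ η) - c * (ξ ⬝ᵥ ξ)) := by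
  simp only [dataLMI, sub_mulVec, smul_mulVec, dotProduct_sub, dotProduct_smul, smul_eq_mul,
    sumElim_dotProduct_fromBlocks_mulVec_sumElim, fromCols_zero, fromRows_zero, zero_mulVec,
    dotProduct_zero, neg_mulVec, dotProduct_neg, one_mulVec, add_zero, zero_add,
    fromCols_mulVec_sumElim, fromRows_mulVec, sumElim_dotProduct_sumElim,
    dotProduct_mul_transpose_mulVec]
  rw [dotProduct_transpose_mulVec K]
  simp only [sub_dotProduct, dotProduct_comm (Rᵀ *ᵥ η) (Xᵀ *ᵥ ξ)]
  ring

lemma two_mul_dotProduct_le_of_dataLMI {A : Matrix ι ρ ℝ} {X W : Matrix ι τ ℝ}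
    {R : Matrix ρ τ ℝ} {Q : Matrix ι ι ℝ} {K : Matrix ρ ι ℝ} {lam π α c : ℝ} (hα : 0 ≤ α)
    (hX : X = A * R + W) (hW : ∀ ξ, Wᵀ *ᵥ ξ ⬝ᵥ Wᵀ *ᵥ ξ ≤ c * (ξ ⬝ᵥ ξ))
    (hLMI : (dataLMI Q K X R lam π α c).NegSemidef) (ξ ζ : ι → ℝ) :
    2 * (ξ ⬝ᵥ (A * K) *ᵥ ζ) ≤ lam * (ξ ⬝ᵥ Q *ᵥ ξ) + (1 + π)⁻¹ * (ζ ⬝ᵥ Q *ᵥ ζ) := by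
  have hresidual : Xᵀ *ᵥ ξ - Rᵀ *ᵥ (Aᵀ *ᵥ ξ) = Wᵀ *ᵥ ξ := by
    rw [hX, transpose_add, transpose_mul, add_mulVec, ← mulVec_mulVec, add_sub_cancel_left]
  have hK : Aᵀ *ᵥ ξ ⬝ᵥ K *ᵥ ζ = ξ ⬝ᵥ (A * K) *ᵥ ζ := by
    rw [← mulVec_mulVec, dotProduct_comm, dotProduct_transpose_mulVec]
  have h := hLMI.2 (Sum.elim ξ (Sum.elim (Aᵀ *ᵥ ξ) ζ))
  rw [sumElim_dotProduct_dataLMI_mulVec_sumElim, hresidual, hK] at h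
  nlinarith [mul_nonneg hα (sub_nonneg.2 (hW ξ))]

end Matrix

lemma mulVec_dotProduct_self_le_l2OpNorm_sq {n : ℕ} (S : Matrix (Fin n) (Fin n) ℝ)
    (v : Fin n → ℝ) : S *ᵥ v ⬝ᵥ S *ᵥ v ≤ l2OpNorm S ^ 2 * (v ⬝ᵥ v) := by
  have hnorm (u : Fin n → ℝ) : ‖WithLp.toLp 2 u‖ ^ 2 = u ⬝ᵥ u := by
    rw [EuclideanSpace.real_norm_sq_eq]
    simp [dotProduct, sq]
  have h := (toEuclideanCLM (𝕜 := ℝ) S).le_opNorm (WithLp.toLp 2 v)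
  rw [toEuclideanCLM_toLp] at h
  have h2 := pow_le_pow_left₀ (norm_nonneg _) h 2
  rwa [mul_pow, hnorm, hnorm] at h2

open scoped MatrixOrder in
lemma Matrix.PosSemidef.dotProduct_mulVec_le_l2OpNorm_sqrt_sq {n : ℕ}
    {P : Matrix (Fin n) (Fin n) ℝ} (hP : P.PosSemidef) (w : Fin n → ℝ) :
    w ⬝ᵥ P *ᵥ w ≤ l2OpNorm (CFC.sqrt P) ^ 2 * (w ⬝ᵥ w) := by
  have hsymm : (CFC.sqrt P)ᵀ = CFC.sqrt P :=
    (isHermitian_iff_isSymm.mp (nonneg_iff_posSemidef.mp (CFC.sqrt_nonneg P)).isHermitian).eq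
  have hP' : P = CFC.sqrt P * (CFC.sqrt P)ᵀ := by
    rw [hsymm, CFC.sqrt_mul_sqrt_self P hP.nonneg]
  conv_lhs => rw [hP', dotProduct_mul_transpose_mulVec, hsymm]
  exact mulVec_dotProduct_self_le_l2OpNorm_sq _ w

theorem data_driven_decrease_general
    (n N Nh m T : ℕ)
    (δ π α lam : ℝ) (hπ : 0 < π) (hα : 0 < α)
    (hlam₀ : 0 < lam)
    (A : Matrix (Fin n) (Fin N) ℝ) (B : Matrix (Fin n) (Fin Nh) ℝ)
    (R₀T : Matrix (Fin N) (Fin T) ℝ) (G₀T : Matrix (Fin Nh) (Fin T) ℝ)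
    (U₀T : Matrix (Fin m) (Fin T) ℝ) (W₀T X₁T : Matrix (Fin n) (Fin T) ℝ)
    (hdata : X₁T = A * R₀T + B * G₀T + W₀T)
    (hW : ∀ k : Fin T, (fun i => W₀T i k) ⬝ᵥ (fun i => W₀T i k) ≤ δ)
    (x : Fin n → ℝ)
    (L : Matrix (Fin N) (Fin n) ℝ) (Gx : Matrix (Fin Nh) (Fin m) ℝ)
    (P : Matrix (Fin n) (Fin n) ℝ) (hP : P.PosDef)
    (H : Matrix (Fin T) (Fin n) ℝ) (hH : R₀T * H = L * P⁻¹)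
    (Rt : Matrix (Fin N ⊕ Fin Nh) (Fin T) ℝ) (hRt : Rt = fromRows R₀T (Gx * U₀T))
    (Rh : Matrix (Fin N ⊕ Fin Nh) (Fin T) ℝ) (hRh : Rh = fromRows R₀T G₀T)
    (hLMI : Matrix.NegSemidef
      (fromBlocks (-(lam • P⁻¹))
          (fromCols (0 : Matrix (Fin n) (Fin N ⊕ Fin Nh) ℝ)
            (0 : Matrix (Fin n) (Fin n) ℝ))
          (fromRows (0 : Matrix (Fin N ⊕ Fin Nh) (Fin n) ℝ)
            (0 : Matrix (Fin n) (Fin n) ℝ))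
          (fromBlocks (0 : Matrix (Fin N ⊕ Fin Nh) (Fin N ⊕ Fin Nh) ℝ)
            (Rt * H) (Rt * H)ᵀ (-((1 + π)⁻¹ • P⁻¹)))
        - α •
        fromBlocks (X₁T * X₁Tᵀ - ((T : ℝ) * δ) • (1 : Matrix (Fin n) (Fin n) ℝ))
          (fromCols (-(X₁T * Rhᵀ)) (0 : Matrix (Fin n) (Fin n) ℝ))
          (fromRows (-(Rh * X₁Tᵀ)) (0 : Matrix (Fin n) (Fin n) ℝ))
          (fromBlocks (Rh * Rhᵀ) (0 : Matrix (Fin N ⊕ Fin Nh) (Fin n) ℝ)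
            (0 : Matrix (Fin n) (Fin N ⊕ Fin Nh) ℝ) (0 : Matrix (Fin n) (Fin n) ℝ))))
    (u : Fin m → ℝ) (hu : u = (U₀T * H * P).mulVec x) :
    ∀ w : Fin n → ℝ, w ⬝ᵥ w ≤ δ →
      (A.mulVec (L.mulVec x) + B.mulVec (Gx.mulVec u) + w) ⬝ᵥ
          P.mulVec (A.mulVec (L.mulVec x) + B.mulVec (Gx.mulVec u) + w)
        ≤ lam * (x ⬝ᵥ P.mulVec x)
          + (1 + 1 / π) * l2OpNorm (open scoped MatrixOrder in CFC.sqrt P) ^ 2 * (w ⬝ᵥ w) := by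
  intro w _
  subst hRt hRh hu
  set a := A *ᵥ (L *ᵥ x) + B *ᵥ (Gx *ᵥ ((U₀T * H * P) *ᵥ x))
  have hPinv : P⁻¹ * P = 1 := nonsing_inv_mul P (isUnit_iff_ne_zero.mpr hP.det_pos.ne')
  have hform (s : Fin n → ℝ) : P *ᵥ s ⬝ᵥ P⁻¹ *ᵥ (P *ᵥ s) = s ⬝ᵥ P *ᵥ s := by
    rw [mulVec_mulVec, hPinv, one_mulVec, dotProduct_comm]
  have hclosedLoop : (fromCols A B * (fromRows R₀T (Gx * U₀T) * H)) *ᵥ (P *ᵥ x) = a := by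
    rw [fromRows_mul, fromCols_mul_fromRows, hH, mulVec_mulVec, add_mul, add_mulVec,
      Matrix.mul_assoc, Matrix.mul_assoc, hPinv, Matrix.mul_one]
    simp only [a, mulVec_mulVec, Matrix.mul_assoc]
  have hdec (s : Fin n → ℝ) :
      2 * (P *ᵥ s ⬝ᵥ a) ≤ lam * (s ⬝ᵥ P *ᵥ s) + (1 + π)⁻¹ * (x ⬝ᵥ P *ᵥ x) := by
    have h := two_mul_dotProduct_le_of_dataLMI (A := fromCols A B) hα.le
      (by rw [hdata, fromCols_mul_fromRows])
      (fun ξ => by simpa using transpose_mulVec_dotProduct_self_le hW ξ) hLMI (P *ᵥ s) (P *ᵥ x)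
    rwa [hform, hform, hclosedLoop] at h
  have hnominal := dotProduct_mulVec_le_mul_of_forall_two_mul_le hlam₀ hdec
  calc (a + w) ⬝ᵥ P *ᵥ (a + w)
      ≤ (1 + π) * (a ⬝ᵥ P *ᵥ a) + (1 + π⁻¹) * (w ⬝ᵥ P *ᵥ w) :=
        hP.posSemidef.dotProduct_add_mulVec_add_le hπ a w
    _ ≤ (1 + π) * (lam * ((1 + π)⁻¹ * (x ⬝ᵥ P *ᵥ x)))
          + (1 + π⁻¹) * (l2OpNorm (open scoped MatrixOrder in CFC.sqrt P) ^ 2 * (w ⬝ᵥ w)) := by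
        gcongr
        exact hP.posSemidef.dotProduct_mulVec_le_l2OpNorm_sqrt_sq w
    _ = _ := by
        field_simp

/-- Core decrease implication of Theorem 2 (data-driven R-CBC and R-SC), pointwise at a
fixed state `x`: under the data-dependent LMI and `R₀T H = L P⁻¹`, the controller
`u = U₀T H P x` yields `B(x⁺) ≤ λ B(x) + (1 + 1/π) ‖√P‖² wᵀw` for all `w` with `wᵀw ≤ δ`,
where `B(x) = xᵀ P x` and `x⁺ = A (L x) + B (Gx u) + w`. -/
theorem data_driven_decrease
    (n N Nh m T : ℕ) (hn : 0 < n) (hN : 0 < N) (hNh : 0 < Nh) (hm : 0 < m) (hT : 0 < T)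
    (δ π α lam : ℝ) (hδ : 0 ≤ δ) (hπ : 0 < π) (hα : 0 < α)
    (hlam₀ : 0 < lam) (hlam₁ : lam ≤ 1)
    (A : Matrix (Fin n) (Fin N) ℝ) (B : Matrix (Fin n) (Fin Nh) ℝ)
    (R₀T : Matrix (Fin N) (Fin T) ℝ) (G₀T : Matrix (Fin Nh) (Fin T) ℝ)
    (U₀T : Matrix (Fin m) (Fin T) ℝ) (W₀T X₁T : Matrix (Fin n) (Fin T) ℝ)
    (hdata : X₁T = A * R₀T + B * G₀T + W₀T)
    (hW : ∀ k : Fin T, (fun i => W₀T i k) ⬝ᵥ (fun i => W₀T i k) ≤ δ)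
    (x : Fin n → ℝ)
    (L : Matrix (Fin N) (Fin n) ℝ) (Gx : Matrix (Fin Nh) (Fin m) ℝ)
    (P : Matrix (Fin n) (Fin n) ℝ) (hP : P.PosDef)
    (H : Matrix (Fin T) (Fin n) ℝ) (hH : R₀T * H = L * P⁻¹)
    (Rt : Matrix (Fin N ⊕ Fin Nh) (Fin T) ℝ) (hRt : Rt = fromRows R₀T (Gx * U₀T))
    (Rh : Matrix (Fin N ⊕ Fin Nh) (Fin T) ℝ) (hRh : Rh = fromRows R₀T G₀T)
    (hLMI : Matrix.NegSemidef
      (fromBlocks (-(lam • P⁻¹))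
          (fromCols (0 : Matrix (Fin n) (Fin N ⊕ Fin Nh) ℝ)
            (0 : Matrix (Fin n) (Fin n) ℝ))
          (fromRows (0 : Matrix (Fin N ⊕ Fin Nh) (Fin n) ℝ)
            (0 : Matrix (Fin n) (Fin n) ℝ))
          (fromBlocks (0 : Matrix (Fin N ⊕ Fin Nh) (Fin N ⊕ Fin Nh) ℝ)
            (Rt * H) (Rt * H)ᵀ (-((1 + π)⁻¹ • P⁻¹)))
        - α •
        fromBlocks (X₁T * X₁Tᵀ - ((T : ℝ) * δ) • (1 : Matrix (Fin n) (Fin n) ℝ))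
          (fromCols (-(X₁T * Rhᵀ)) (0 : Matrix (Fin n) (Fin n) ℝ))
          (fromRows (-(Rh * X₁Tᵀ)) (0 : Matrix (Fin n) (Fin n) ℝ))
          (fromBlocks (Rh * Rhᵀ) (0 : Matrix (Fin N ⊕ Fin Nh) (Fin n) ℝ)
            (0 : Matrix (Fin n) (Fin N ⊕ Fin Nh) ℝ) (0 : Matrix (Fin n) (Fin n) ℝ))))
    (u : Fin m → ℝ) (hu : u = (U₀T * H * P).mulVec x) :
    ∀ w : Fin n → ℝ, w ⬝ᵥ w ≤ δ →
      (A.mulVec (L.mulVec x) + B.mulVec (Gx.mulVec u) + w) ⬝ᵥ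
          P.mulVec (A.mulVec (L.mulVec x) + B.mulVec (Gx.mulVec u) + w)
        ≤ lam * (x ⬝ᵥ P.mulVec x)
          + (1 + 1 / π) * l2OpNorm (open scoped MatrixOrder in CFC.sqrt P) ^ 2 * (w ⬝ᵥ w) :=
  data_driven_decrease_general n N Nh m T δ π α lam hπ hα hlam₀ A B R₀T G₀T U₀T W₀T X₁T hdata hW x L
    Gx P hP H hH Rt hRt Rh hRh hLMI u hu
end
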